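/- For every type T and every T-signature S, the syntax STS(S), with unit Var and the recursively defined substitution subst, is a monad on [T,Set]: for all families V, W, X, all f : ∀ t, V t → STS W t, g : ∀ t, W t → STS X t, all t ∈ T, v ∈ V t and x ∈ STS V t, one has subst f (Var v) = f t v, subst Var x = x, and subst g (subst f x) = subst (fun t v => subst g (f t v)) x. -/

import Mathlib

set_option autoImplicit false

universe u

/-- `Fresh a V` is the family `V` enriched with one fresh element of index `a`,
i.e. `V^{*a}`. -/
inductive Fresh {T : Type u} (a : T) (V : T → Type u) : T → Type u where
  | old : ∀ {t : T}, V t → Fresh a V t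
  | new : Fresh a V a

/-- `pow l V` is `V` enriched with fresh variables of types according to the
list `l`, written `V ** l`. -/
def pow {T : Type u} (l : List T) (V : T → Type u) : T → Type u :=
  match l with
  | [] => V
  | b :: bs => pow bs (Fresh b V)

/-- A `T`-signature: to each output type it could assign arities; here a family
of `T`-arities indexed by some type, an arity being a pair of a list of pairs
`(s⃗, t)` and an output type `t₀`. -/
structure Signature (T : Type u) where
  idx : Type u
  ar : idx → List (List T × T) × T

mutual
/-- The syntax associated to the signature `S`: an inductive family parametrized
by a family `V` of variables and indexed by object types. `Var` makes a variable
into a term; for each arity `i` of `S` with argument list `[(s⃗₁,t₁),…,(s⃗ₙ,tₙ)]`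
and output type `t₀`, `Build i` takes arguments in `STS S (V ** s⃗ⱼ) tⱼ` and
produces a term of type `t₀`. -/
inductive STS {T : Type u} (S : Signature T) : (T → Type u) → T → Type (u + 1) where
  | Var : ∀ {V : T → Type u} {t : T}, V t → STS S V t
  | Build : ∀ {V : T → Type u} (i : S.idx),
      STSList S V (S.ar i).1 → STS S V (S.ar i).2

inductive STSList {T : Type u} (S : Signature T) :
    (T → Type u) → List (List T × T) → Type (u + 1) where
  | nil : ∀ {V : T → Type u}, STSList S V []
  | cons : ∀ {V : T → Type u} {b : List T × T} {bs : List (List T × T)},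
      STS S (pow b.1 V) b.2 → STSList S V bs → STSList S V (b :: bs)
end

/-- The shifting of a substitution map `f : V → STS S W`, relative to a
candidate substitution operation `sb`: the fresh variable is sent to itself as
a term (via `Var`), and an old variable `v` is sent to the renaming of `f v`
along the inclusion `W → W^{*a}` (renaming being substitution with a family of
variables-as-terms). -/
def genShift {T : Type u} (S : Signature T)
    (sb : ∀ (V W : T → Type u), (∀ t, V t → STS S W t) → ∀ t, STS S V t → STS S W t)
    (a : T) {V W : T → Type u} (f : ∀ t, V t → STS S W t) :
    ∀ t, Fresh a V t → STS S (Fresh a W) t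
  | _, .old v => sb W (Fresh a W) (fun _ w => STS.Var (Fresh.old w)) _ (f _ v)
  | _, .new => STS.Var Fresh.new

/-- Multiple shifting `f^{s⃗}`, relative to a candidate substitution operation. -/
def genLshift {T : Type u} (S : Signature T)
    (sb : ∀ (V W : T → Type u), (∀ t, V t → STS S W t) → ∀ t, STS S V t → STS S W t) :
    ∀ (l : List T) {V W : T → Type u},
      (∀ t, V t → STS S W t) → ∀ t, pow l V t → STS S (pow l W) t
  | [], _, _, f => f
  | b :: bs, _, _, f => genLshift S sb bs (genShift S sb b f)

/-- Map a family of functions over the components of an argument list of terms. -/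
def stsMap {T : Type u} {S : Signature T} {V W : T → Type u}
    (h : ∀ b : List T × T, STS S (pow b.1 V) b.2 → STS S (pow b.1 W) b.2) :
    ∀ {l : List (List T × T)}, STSList S V l → STSList S W l
  | _, .nil => .nil
  | _, .cons (b := b) x xs => .cons (h b x) (stsMap h xs)

/-!
Under a binder, substitution shifts the substituting map, and shifting renames along the
inclusion `W → W^{*a}`; so substitution is defined after a separate, structurally recursive
renaming. Each monad law, and each fusion law it relies on (substituting variables is
renaming; renaming and substitution fuse in either order), is proved by simultaneous
induction over terms and argument lists, the binder case reducing to the same law for the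
shifted maps. Fusion of two renamings needs no induction of its own: it is fusion of a
substitution after a renaming, applied to a variable-valued map.
-/

section

variable {T : Type u} {S : Signature T}

def Fresh.map {a : T} {V W : T → Type u} (g : ∀ t, V t → W t) :
    ∀ t, Fresh a V t → Fresh a W t
  | _, .old v => .old (g _ v)
  | _, .new => .new

def pow.map : ∀ (l : List T) {V W : T → Type u},
    (∀ t, V t → W t) → ∀ t, pow l V t → pow l W t
  | [], _, _, g => g
  | _ :: bs, _, _, g => pow.map bs (Fresh.map g)

mutual
def STS.ren {V W : T → Type u} (g : ∀ t, V t → W t) : ∀ t, STS S V t → STS S W t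
  | _, .Var v => .Var (g _ v)
  | _, .Build i xs => .Build i (STSList.ren g xs)

def STSList.ren {V W : T → Type u} (g : ∀ t, V t → W t) :
    ∀ {l}, STSList S V l → STSList S W l
  | _, .nil => .nil
  | _, .cons (b := b) x xs => .cons (STS.ren (pow.map b.1 g) _ x) (STSList.ren g xs)
end

namespace STS

def shift (a : T) {V W : T → Type u} (f : ∀ t, V t → STS S W t) :
    ∀ t, Fresh a V t → STS S (Fresh a W) t
  | _, .old v => ren (fun _ w => .old w) _ (f _ v)
  | _, .new => Var .new

def lshift : ∀ (l : List T) {V W : T → Type u},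
    (∀ t, V t → STS S W t) → ∀ t, pow l V t → STS S (pow l W) t
  | [], _, _, f => f
  | b :: bs, _, _, f => lshift bs (shift b f)

end STS

mutual
def STS.subst {V W : T → Type u} (f : ∀ t, V t → STS S W t) :
    ∀ t, STS S V t → STS S W t
  | _, .Var v => f _ v
  | _, .Build i xs => .Build i (STSList.subst f xs)

def STSList.subst {V W : T → Type u} (f : ∀ t, V t → STS S W t) :
    ∀ {l}, STSList S V l → STSList S W l
  | _, .nil => .nil
  | _, .cons (b := b) x xs => .cons (STS.subst (STS.lshift b.1 f) _ x) (STSList.subst f xs)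
end

namespace STS

variable {V W X : T → Type u}

theorem lshift_var_comp (l : List T) (g : ∀ t, V t → W t) :
    lshift (S := S) l (fun t v => Var (g t v)) = fun t v => Var (pow.map l g t v) := by
  induction l generalizing V W with
  | nil => rfl
  | cons b bs ih =>
    have shift_var_comp : shift (S := S) b (fun t v => Var (g t v))
        = fun t v => Var (Fresh.map g t v) := by
      funext t v; cases v <;> rfl
    exact (congrArg (lshift bs) shift_var_comp).trans (ih _)

mutual
theorem subst_var_comp {V W : T → Type u} (g : ∀ t, V t → W t) :
    ∀ t (x : STS S V t), subst (fun t v => Var (g t v)) t x = ren g t x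
  | _, .Var _ => rfl
  | _, .Build i xs => congrArg (Build i) (STSList.subst_var_comp g xs)

theorem _root_.STSList.subst_var_comp {V W : T → Type u} (g : ∀ t, V t → W t) :
    ∀ {l} (xs : STSList S V l),
      STSList.subst (fun t v => Var (g t v)) xs = STSList.ren g xs
  | _, .nil => rfl
  | _, .cons x xs => by
    simp only [STSList.subst, STSList.ren]
    rw [lshift_var_comp, subst_var_comp _ _ x, STSList.subst_var_comp g xs]
end

theorem lshift_comp_map (l : List T) (g : ∀ t, V t → W t) (f : ∀ t, W t → STS S X t) :
    lshift l (fun t v => f t (g t v)) = fun t v => lshift l f t (pow.map l g t v) := by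
  induction l generalizing V W X with
  | nil => rfl
  | cons b bs ih =>
    have shift_comp_map : shift b (fun t v => f t (g t v))
        = fun t v => shift b f t (Fresh.map g t v) := by
      funext t v; cases v <;> rfl
    exact (congrArg (lshift bs) shift_comp_map).trans (ih _ _)

mutual
theorem subst_ren {V W X : T → Type u} (g : ∀ t, V t → W t) (f : ∀ t, W t → STS S X t) :
    ∀ t (x : STS S V t), subst f t (ren g t x) = subst (fun t v => f t (g t v)) t x
  | _, .Var _ => rfl
  | _, .Build i xs => congrArg (Build i) (STSList.subst_ren g f xs)

theorem _root_.STSList.subst_ren {V W X : T → Type u} (g : ∀ t, V t → W t)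
    (f : ∀ t, W t → STS S X t) :
    ∀ {l} (xs : STSList S V l),
      STSList.subst f (STSList.ren g xs) = STSList.subst (fun t v => f t (g t v)) xs
  | _, .nil => rfl
  | _, .cons (b := b) x xs => by
    simp only [STSList.subst, STSList.ren]
    rw [subst_ren _ _ _ x, STSList.subst_ren g f xs, lshift_comp_map b.1 g f]
end

theorem ren_ren (g : ∀ t, V t → W t) (g' : ∀ t, W t → X t) (t : T) (x : STS S V t) :
    ren g' t (ren g t x) = ren (fun t v => g' t (g t v)) t x := by
  rw [← subst_var_comp g', subst_ren, subst_var_comp]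

theorem lshift_ren_comp (l : List T) (f : ∀ t, V t → STS S W t) (g : ∀ t, W t → X t) :
    lshift l (fun t v => ren g t (f t v)) = fun t v => ren (pow.map l g) t (lshift l f t v) := by
  induction l generalizing V W X with
  | nil => rfl
  | cons b bs ih =>
    have shift_ren_comp : shift b (fun t v => ren g t (f t v))
        = fun t v => ren (Fresh.map g) t (shift b f t v) := by
      funext t v
      cases v with
      | old v => simp only [shift, ren_ren]; rfl
      | new => rfl
    exact (congrArg (lshift bs) shift_ren_comp).trans (ih _ _)

mutual
theorem ren_subst {V W X : T → Type u} (f : ∀ t, V t → STS S W t) (g : ∀ t, W t → X t) :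
    ∀ t (x : STS S V t), ren g t (subst f t x) = subst (fun t v => ren g t (f t v)) t x
  | _, .Var _ => rfl
  | _, .Build i xs => congrArg (Build i) (STSList.ren_subst f g xs)

theorem _root_.STSList.ren_subst {V W X : T → Type u} (f : ∀ t, V t → STS S W t)
    (g : ∀ t, W t → X t) :
    ∀ {l} (xs : STSList S V l),
      STSList.ren g (STSList.subst f xs) = STSList.subst (fun t v => ren g t (f t v)) xs
  | _, .nil => rfl
  | _, .cons x xs => by
    simp only [STSList.subst, STSList.ren]
    rw [ren_subst _ _ _ x, STSList.ren_subst f g xs, lshift_ren_comp]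
end

theorem lshift_subst_comp (l : List T) (f : ∀ t, V t → STS S W t)
    (g : ∀ t, W t → STS S X t) :
    lshift l (fun t v => subst g t (f t v))
      = fun t v => subst (lshift l g) t (lshift l f t v) := by
  induction l generalizing V W X with
  | nil => rfl
  | cons b bs ih =>
    have shift_subst_comp : shift b (fun t v => subst g t (f t v))
        = fun t v => subst (shift b g) t (shift b f t v) := by
      funext t v
      cases v with
      | old v => simp only [shift, ren_subst, subst_ren]
      | new => rfl
    exact (congrArg (lshift bs) shift_subst_comp).trans (ih _ _)

mutual
theorem subst_subst {V W X : T → Type u} (f : ∀ t, V t → STS S W t)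
    (g : ∀ t, W t → STS S X t) :
    ∀ t (x : STS S V t), subst g t (subst f t x) = subst (fun t v => subst g t (f t v)) t x
  | _, .Var _ => rfl
  | _, .Build i xs => congrArg (Build i) (STSList.subst_subst f g xs)

theorem _root_.STSList.subst_subst {V W X : T → Type u} (f : ∀ t, V t → STS S W t)
    (g : ∀ t, W t → STS S X t) :
    ∀ {l} (xs : STSList S V l),
      STSList.subst g (STSList.subst f xs) = STSList.subst (fun t v => subst g t (f t v)) xs
  | _, .nil => rfl
  | _, .cons x xs => by
    simp only [STSList.subst]
    rw [subst_subst _ _ _ x, STSList.subst_subst f g xs, lshift_subst_comp]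
end

theorem lshift_var (l : List T) :
    lshift (S := S) (V := V) l (fun _ v => Var v) = fun _ v => Var v := by
  induction l generalizing V with
  | nil => rfl
  | cons b bs ih =>
    have shift_var : shift (S := S) (V := V) b (fun _ v => Var v) = fun _ v => Var v := by
      funext t v; cases v <;> rfl
    exact (congrArg (lshift bs) shift_var).trans ih

mutual
theorem subst_var {V : T → Type u} : ∀ t (x : STS S V t), subst (fun _ v => Var v) t x = x
  | _, .Var _ => rfl
  | _, .Build i xs => congrArg (Build i) (STSList.subst_var xs)

theorem _root_.STSList.subst_var {V : T → Type u} :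
    ∀ {l} (xs : STSList S V l), STSList.subst (fun _ v => Var v) xs = xs
  | _, .nil => rfl
  | _, .cons x xs => by
    simp only [STSList.subst]
    rw [lshift_var, subst_var _ x, STSList.subst_var xs]
end

theorem genLshift_subst (l : List T) (f : ∀ t, V t → STS S W t) :
    genLshift S (fun _ _ => subst) l f = lshift l f := by
  induction l generalizing V W with
  | nil => rfl
  | cons b bs ih =>
    have genShift_subst : genShift S (fun _ _ => subst) b f = shift b f := by
      funext t v
      cases v with
      | old v => exact subst_var_comp _ _ _
      | new => rfl
    exact (congrArg (genLshift S _ bs) genShift_subst).trans (ih _)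

theorem _root_.STSList.subst_eq_stsMap (f : ∀ t, V t → STS S W t) :
    ∀ {l} (xs : STSList S V l),
      STSList.subst f xs = stsMap (fun b x => subst (lshift b.1 f) b.2 x) xs
  | _, .nil => rfl
  | _, .cons _ xs => congrArg (STSList.cons _) (STSList.subst_eq_stsMap f xs)

end STS

end

/-- For every type `T` and every `T`-signature `S`, the syntax `STS S`, with
unit `Var` and the recursively defined substitution `sb`, is a monad on
`[T,Set]`: there is a substitution operation `sb` satisfying the defining
recursion equations (variables are substituted by `f`; under `Build i` one
substitutes with the suitably shifted maps), and it satisfies the three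
Kleisli-triple (monad) laws. -/
theorem STS_is_monad (T : Type u) (S : Signature T) :
    ∃ sb : ∀ (V W : T → Type u),
        (∀ t, V t → STS S W t) → ∀ t, STS S V t → STS S W t,
      -- defining recursion equations of the substitution
      (∀ (V W : T → Type u) (f : ∀ t, V t → STS S W t) (t : T) (v : V t),
        sb V W f t (STS.Var v) = f t v) ∧
      (∀ (V W : T → Type u) (f : ∀ t, V t → STS S W t) (i : S.idx)
          (xs : STSList S V (S.ar i).1),
        sb V W f (S.ar i).2 (STS.Build i xs)
          = STS.Build i
              (stsMap (fun b x =>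
                sb (pow b.1 V) (pow b.1 W) (genLshift S sb b.1 f) b.2 x) xs)) ∧
      -- the three monad laws
      (∀ (V W : T → Type u) (f : ∀ t, V t → STS S W t) (t : T) (v : V t),
        sb V W f t (STS.Var v) = f t v) ∧
      (∀ (V : T → Type u) (t : T) (x : STS S V t),
        sb V V (fun t v => STS.Var v) t x = x) ∧
      (∀ (V W X : T → Type u) (f : ∀ t, V t → STS S W t)
          (g : ∀ t, W t → STS S X t) (t : T) (x : STS S V t),
        sb W X g t (sb V W f t x)
          = sb V X (fun t v => sb W X g t (f t v)) t x) := by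
  refine ⟨fun _ _ => STS.subst, fun _ _ _ _ _ => rfl, fun V W f i xs => ?_,
    fun _ _ _ _ _ => rfl, fun _ => STS.subst_var, fun _ _ _ => STS.subst_subst⟩
  simp only [STS.genLshift_subst]
  exact congrArg (STS.Build i) (STSList.subst_eq_stsMap f xs)
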